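/- arXiv:1212.0457 — 8 statements merged into one kernel-verified Lean document; each statement's English description precedes it below -/
import Mathlib

section
/- Let G be a group and A a nonempty finite subset of G. If |AA^{-1}| = |A|, then AA^{-1} is a subgroup of G and A is a left coset of it (i.e., A = a(A^{-1}A) = (AA^{-1})a for any a ∈ A; in particular A is contained in a left coset of a subgroup of size |A|). -/
/-!
If `#(A * A⁻¹) = #A`, then for each `a ∈ A` the translate `A * {a⁻¹}`, which has `#A` elements and
lies in `A * A⁻¹`, must be all of `A * A⁻¹`. So `S := A * A⁻¹` is a right translate of `A`, and
since `S⁻¹ = S` it is also a left translate `{a} * A⁻¹`. Then `S * S = A * {a⁻¹ * a} * A⁻¹ = S`,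
so `S` is a subgroup, `A = S * {a}`, and `A⁻¹ * A = {a⁻¹} * S * S * {a} = {a⁻¹} * A`.
-/

open Finset Pointwise

namespace Finset

variable {G : Type*} [Group G] [DecidableEq G] {A : Finset G} {a : G}

@[simp]
lemma inv_mul_inv_self (A : Finset G) : (A * A⁻¹)⁻¹ = A * A⁻¹ := by
  rw [mul_inv_rev, inv_inv]

lemma mul_inv_eq_mul_singleton_inv_of_card_le (h : #(A * A⁻¹) ≤ #A) (ha : a ∈ A) :
    A * A⁻¹ = A * {a⁻¹} :=
  (eq_of_subset_of_card_le (mul_subset_mul_left (singleton_subset_iff.2 (inv_mem_inv ha)))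
    (by rwa [card_mul_singleton])).symm

lemma mul_inv_eq_singleton_mul_inv_of_card_le (h : #(A * A⁻¹) ≤ #A) (ha : a ∈ A) :
    A * A⁻¹ = {a} * A⁻¹ := by
  rw [← inv_mul_inv_self, mul_inv_eq_mul_singleton_inv_of_card_le h ha, mul_inv_rev,
    inv_singleton, inv_inv]

lemma mul_inv_mul_singleton_of_card_le (h : #(A * A⁻¹) ≤ #A) (ha : a ∈ A) :
    A * A⁻¹ * {a} = A := by
  rw [mul_inv_eq_mul_singleton_inv_of_card_le h ha, mul_assoc, singleton_mul_singleton,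
    inv_mul_cancel, singleton_one, mul_one]

lemma mul_inv_mul_mul_inv_of_card_le (h : #(A * A⁻¹) ≤ #A) (ha : a ∈ A) :
    A * A⁻¹ * (A * A⁻¹) = A * A⁻¹ :=
  calc A * A⁻¹ * (A * A⁻¹) = A * {a⁻¹} * ({a} * A⁻¹) := by
        rw [← mul_inv_eq_mul_singleton_inv_of_card_le h ha,
          ← mul_inv_eq_singleton_mul_inv_of_card_le h ha]
    _ = A * A⁻¹ := by
        rw [mul_assoc, ← mul_assoc {a⁻¹}, singleton_mul_singleton, inv_mul_cancel, singleton_one,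
          one_mul]

lemma exists_subgroup_coe_eq_mul_inv_of_card_le (h : #(A * A⁻¹) ≤ #A) (hA : A.Nonempty) :
    ∃ H : Subgroup G, (↑(A * A⁻¹) : Set G) = H := by
  have ⟨a, ha⟩ := hA
  refine ⟨Subgroup.ofDiv (↑(A * A⁻¹) : Set G) (coe_nonempty.2 (hA.mul hA.inv))
    fun x hx y hy ↦ ?_, rfl⟩
  rw [mem_coe, ← mul_inv_mul_mul_inv_of_card_le h ha]
  exact mul_mem_mul hx (by simpa using inv_mem_inv (mem_coe.1 hy))

lemma mul_inv_mul_self_of_card_le (h : #(A * A⁻¹) ≤ #A) (ha : a ∈ A) : A * A⁻¹ * A = A :=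
  calc A * A⁻¹ * A = A * A⁻¹ * (A * A⁻¹ * {a}) := by
        rw [mul_inv_mul_singleton_of_card_le h ha]
    _ = A := by
        rw [← mul_assoc, mul_inv_mul_mul_inv_of_card_le h ha, mul_inv_mul_singleton_of_card_le h ha]

lemma smul_inv_mul_of_card_le (h : #(A * A⁻¹) ≤ #A) (ha : a ∈ A) : a • (A⁻¹ * A) = A := by
  have hA_inv : A⁻¹ = {a⁻¹} * (A * A⁻¹) := by
    conv_lhs => rw [← mul_inv_mul_singleton_of_card_le h ha]
    rw [mul_inv_rev, inv_mul_inv_self, inv_singleton]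
  rw [hA_inv, mul_assoc, mul_inv_mul_self_of_card_le h ha, ← smul_mul_assoc,
    smul_finset_singleton, smul_eq_mul, mul_inv_cancel, singleton_one, one_mul]

end Finset

theorem stmt0 {G : Type*} [Group G] [DecidableEq G] (A : Finset G)
    (hA : A.Nonempty) (h : (A * A⁻¹).card = A.card) :
    (∃ H : Subgroup G, (↑(A * A⁻¹) : Set G) = ↑H) ∧
      ∀ a ∈ A, A = a • (A⁻¹ * A) ∧ A = (A * A⁻¹) * {a} :=
  ⟨exists_subgroup_coe_eq_mul_inv_of_card_le h.le hA, fun _ ha ↦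
    ⟨(smul_inv_mul_of_card_le h.le ha).symm, (mul_inv_mul_singleton_of_card_le h.le ha).symm⟩⟩
end

section
/- Let G be a group and A a nonempty finite subset of G with |AA^{-1}| ≤ K|A| for some real K < 1.5. Then for every x ∈ A^{-1}A, the number of pairs (a, a') ∈ A × A with a^{-1}a' = x is at least (2 - K)|A|, and in particular is greater than |A|/2. -/
/-! The pairs `(a, a')` with `a⁻¹ * a' = b⁻¹ * c` are in bijection, via `y ↦ (y * b, y * c)`, with
the common elements of the translates `A * {b⁻¹}` and `A * {c⁻¹}`. For `b, c ∈ A` both translates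
have `|A|` elements and lie in `A * A⁻¹`, so by inclusion–exclusion they share at least
`2|A| - |A * A⁻¹| ≥ (2 - K)|A|` elements, which exceeds `|A| / 2` when `K < 3 / 2`. -/

open Finset Pointwise

namespace Finset

variable {G : Type*} [Group G] [DecidableEq G]

theorem mem_mul_singleton_inv {A : Finset G} {b y : G} : y ∈ A * {b⁻¹} ↔ y * b ∈ A := by
  rw [mul_singleton, MulOpposite.op_inv, mem_inv_smul_finset_iff, op_smul_eq_mul]

theorem card_filter_inv_mul_eq_card_mul_singleton_inter (A : Finset G) (b c : G) :
    #((A ×ˢ A).filter (fun p => p.1⁻¹ * p.2 = b⁻¹ * c)) = #((A * {b⁻¹}) ∩ (A * {c⁻¹})) := by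
  have key {a a' : G} (h : a⁻¹ * a' = b⁻¹ * c) : a * b⁻¹ * c = a' := by
    rw [mul_assoc, ← h, mul_inv_cancel_left]
  refine card_nbij' (fun p => p.1 * b⁻¹) (fun y => (y * b, y * c)) ?_ ?_ ?_ ?_
  · rintro ⟨a, a'⟩ hp
    simp only [coe_filter, mem_product] at hp
    obtain ⟨⟨ha, ha'⟩, hx⟩ := hp
    simp only [coe_inter, Set.mem_inter_iff, mem_coe, mem_mul_singleton_inv, key hx,
      inv_mul_cancel_right]
    exact ⟨ha, ha'⟩
  · intro y hy
    simp only [coe_inter, Set.mem_inter_iff, mem_coe, mem_mul_singleton_inv] at hy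
    simp only [coe_filter, mem_product]
    exact ⟨hy, by group⟩
  · rintro ⟨a, a'⟩ hp
    simp only [coe_filter, mem_product] at hp
    simp [key hp.2]
  · intro y _
    simp

theorem two_mul_card_le_card_mul_add_card_mul_singleton_inter {M : Type*} [Mul M]
    [IsRightCancelMul M] [DecidableEq M] {A B : Finset M} {b c : M}
    (hb : b ∈ B) (hc : c ∈ B) : 2 * #A ≤ #(A * B) + #((A * {b}) ∩ (A * {c})) := by
  have hunion : A * {b} ∪ A * {c} ⊆ A * B :=
    union_subset (mul_subset_mul_left (singleton_subset_iff.2 hb))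
      (mul_subset_mul_left (singleton_subset_iff.2 hc))
  have hincl_excl := card_union_add_card_inter (A * {b}) (A * {c})
  rw [card_mul_singleton, card_mul_singleton] at hincl_excl
  have hle := card_le_card hunion
  omega

end Finset

theorem stmt1 {G : Type*} [Group G] [DecidableEq G] (A : Finset G) (K : ℝ)
    (hA : A.Nonempty) (hK : K < 1.5)
    (h : ((A * A⁻¹).card : ℝ) ≤ K * A.card) :
    ∀ x ∈ A⁻¹ * A,
      (2 - K) * A.card ≤ (((A ×ˢ A).filter (fun p => p.1⁻¹ * p.2 = x)).card : ℝ) ∧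
      (A.card : ℝ) / 2 < (((A ×ˢ A).filter (fun p => p.1⁻¹ * p.2 = x)).card : ℝ) := by
  intro x hx
  obtain ⟨_, hu, c, hc, rfl⟩ := mem_mul.1 hx
  obtain ⟨b, hb, rfl⟩ := mem_inv.1 hu
  have hinter : 2 * #A ≤ #(A * A⁻¹) + #((A * {b⁻¹}) ∩ (A * {c⁻¹})) :=
    two_mul_card_le_card_mul_add_card_mul_singleton_inter (inv_mem_inv hb) (inv_mem_inv hc)
  rw [← card_filter_inv_mul_eq_card_mul_singleton_inter] at hinter
  have hcount : (2 - K) * #A ≤ #((A ×ˢ A).filter (fun p => p.1⁻¹ * p.2 = b⁻¹ * c)) := by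
    have := (Nat.cast_le (α := ℝ)).2 hinter
    push_cast at this
    linarith
  have hpos : (0 : ℝ) < #A := by exact_mod_cast hA.card_pos
  exact ⟨hcount, by nlinarith⟩
end

section
/- Let G be a group and A a nonempty finite subset of G with |AA^{-1}| ≤ K|A| for some K < 1.5. Then A^{-1}A is a subgroup of G of size at most K|A|, and A is contained in a single left coset of A^{-1}A. -/
open Finset Pointwise

/-!
If `2 |AA⁻¹| < 3 |A|`, then for `x, y ∈ A` the translates `xA⁻¹` and `yA⁻¹` both lie in `AA⁻¹`,
so they overlap in more than `|A| / 2` points: every `g ∈ A⁻¹A` has more than `|A| / 2`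
representations `g = a⁻¹b`, i.e. `|A⁻¹ ∩ gA⁻¹| > |A| / 2`. Two such subsets of `A⁻¹` must meet,
which makes `A⁻¹A` closed under multiplication, and summing the representations gives
`|A⁻¹A| < 2 |A|`. Finally, for `a ∈ A` and `g ∈ A⁻¹A` the translates `a⁻¹A` and `ga⁻¹A` of size
`|A|` meet inside the group `A⁻¹A`, so `aga⁻¹ ∈ AA⁻¹`, and conjugation by `a` embeds `A⁻¹A`
into `AA⁻¹`.
-/

namespace Finset

variable {G : Type*} [Group G] [DecidableEq G] {A : Finset G} {a g h : G}

lemma sum_convolution (A B : Finset G) : ∑ x ∈ A * B, A.convolution B x = #A * #B := by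
  rw [← card_product]
  exact (card_eq_sum_card_fiberwise fun p hp ↦
    mul_mem_mul (mem_product.1 hp).1 (mem_product.1 hp).2).symm

lemma inv_mem_inv_mul (hg : g ∈ A⁻¹ * A) : g⁻¹ ∈ A⁻¹ * A := by
  obtain ⟨x, hx, y, hy, rfl⟩ := mem_mul.1 hg
  exact mul_inv_rev x y ▸ mul_mem_mul (inv_mem_inv hy) (mem_inv'.1 hx)

lemma subset_smul_inv_mul (ha : a ∈ A) : A ⊆ a • (A⁻¹ * A) := by
  rw [← smul_mul_assoc]
  exact subset_mul_right A (mem_smul_finset.2 ⟨a⁻¹, inv_mem_inv ha, mul_inv_cancel a⟩)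

lemma two_mul_card_le_card_mul_inv_add_card_inter_smul (hg : g ∈ A⁻¹ * A) :
    2 * #A ≤ #(A * A⁻¹) + #(A⁻¹ ∩ g • A⁻¹) := by
  obtain ⟨x, hx, y, hy, rfl⟩ := mem_mul.1 hg
  have hx' : x⁻¹ ∈ A := mem_inv'.1 hx
  have htranslate : x⁻¹ • (A⁻¹ ∩ (x * y) • A⁻¹) = x⁻¹ • A⁻¹ ∩ y • A⁻¹ := by
    rw [smul_finset_inter, smul_smul, inv_mul_cancel_left]
  have hunion : #(x⁻¹ • A⁻¹ ∪ y • A⁻¹) ≤ #(A * A⁻¹) :=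
    card_le_card (union_subset (smul_finset_subset_mul hx') (smul_finset_subset_mul hy))
  have := card_union_add_card_inter (x⁻¹ • A⁻¹) (y • A⁻¹)
  rw [← htranslate, card_smul_finset, card_smul_finset, card_smul_finset, card_inv] at this
  omega

section SmallMulInv

variable (hA : 2 * #(A * A⁻¹) < 3 * #A)
include hA

lemma mul_mem_inv_mul (hg : g ∈ A⁻¹ * A) (hh : h ∈ A⁻¹ * A) :
    g * h ∈ A⁻¹ * A := by
  have hg' := two_mul_card_le_card_mul_inv_add_card_inter_smul (inv_mem_inv_mul hg)
  have hh' := two_mul_card_le_card_mul_inv_add_card_inter_smul hh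
  obtain ⟨t, ht⟩ := inter_nonempty_of_card_lt_card_add_card
    (inter_subset_left (s₁ := A⁻¹) (s₂ := g⁻¹ • A⁻¹)) (inter_subset_left (s₂ := h • A⁻¹))
    (by rw [card_inv]; omega)
  simp only [mem_inter, mem_smul_finset, smul_eq_mul] at ht
  obtain ⟨⟨-, u, hu, rfl⟩, -, v, hv, hv'⟩ := ht
  have hgh : g * h = u * v⁻¹ := by rw [eq_mul_inv_iff_mul_eq, mul_assoc, hv', mul_inv_cancel_left]
  rw [hgh]
  exact mul_mem_mul hu (mem_inv'.1 hv)

lemma card_inv_mul_lt_two_mul_card : #(A⁻¹ * A) < 2 * #A := by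
  have hrep (g : G) (hg : g ∈ A⁻¹ * A) : #A + 1 ≤ 2 * A⁻¹.convolution A g := by
    have := two_mul_card_le_card_mul_inv_add_card_inter_smul hg
    rw [card_inter_smul, inv_inv] at this
    omega
  refine Nat.lt_of_mul_lt_mul_right (a := #A + 1) ?_
  calc #(A⁻¹ * A) * (#A + 1) = ∑ _g ∈ A⁻¹ * A, (#A + 1) := by rw [sum_const, smul_eq_mul]
    _ ≤ ∑ g ∈ A⁻¹ * A, 2 * A⁻¹.convolution A g := sum_le_sum hrep
    _ = 2 * #A * #A := by rw [← mul_sum, sum_convolution, card_inv, mul_assoc]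
    _ < 2 * #A * (#A + 1) := Nat.mul_lt_mul_of_pos_left (Nat.lt_succ_self _) (by omega)

lemma mul_mul_inv_mem_mul_inv (ha : a ∈ A) (hg : g ∈ A⁻¹ * A) : a * g * a⁻¹ ∈ A * A⁻¹ := by
  have hleft : a⁻¹ • A ⊆ A⁻¹ * A := smul_finset_subset_mul (inv_mem_inv ha)
  have hright : (g * a⁻¹) • A ⊆ A⁻¹ * A := by
    intro x hx
    obtain ⟨y, hy, rfl⟩ := mem_smul_finset.1 hx
    rw [smul_eq_mul, mul_assoc]
    exact mul_mem_inv_mul hA hg (mul_mem_mul (inv_mem_inv ha) hy)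
  obtain ⟨t, ht⟩ := inter_nonempty_of_card_lt_card_add_card hleft hright <| by
    rw [card_smul_finset, card_smul_finset]
    linarith [card_inv_mul_lt_two_mul_card hA]
  simp only [mem_inter, mem_smul_finset, smul_eq_mul] at ht
  obtain ⟨⟨u, hu, rfl⟩, v, hv, hv'⟩ := ht
  have hconj : a * g * a⁻¹ = u * v⁻¹ := calc
    a * g * a⁻¹ = a * (g * a⁻¹ * v) * v⁻¹ := by group
    _ = u * v⁻¹ := by rw [hv', mul_inv_cancel_left]
  exact hconj ▸ mul_mem_mul hu (inv_mem_inv hv)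

lemma card_inv_mul_le_card_mul_inv : #(A⁻¹ * A) ≤ #(A * A⁻¹) := by
  obtain ⟨a, ha⟩ := card_pos.1 (by omega : 0 < #A)
  exact card_le_card_of_injOn (fun g ↦ a * g * a⁻¹)
    (fun _ hg ↦ mul_mul_inv_mem_mul_inv hA ha hg) (fun _ _ _ _ h ↦ by simpa using h)

end SmallMulInv

def invMulSubgroupOfSmallMulInv (A : Finset G) (hA : 2 * #(A * A⁻¹) < 3 * #A) :
    Subgroup G where
  carrier := ↑(A⁻¹ * A)
  mul_mem' := mul_mem_inv_mul hA
  one_mem' := by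
    obtain ⟨a, ha⟩ := card_pos.1 (by omega : 0 < #A)
    exact inv_mul_cancel a ▸ mul_mem_mul (inv_mem_inv ha) ha
  inv_mem' := inv_mem_inv_mul

end Finset

theorem stmt3 {G : Type*} [Group G] [DecidableEq G] (A : Finset G) (K : ℝ)
    (hA : A.Nonempty) (hK : K < 1.5)
    (h : ((A * A⁻¹).card : ℝ) ≤ K * A.card) :
    (∃ H : Subgroup G, (↑(A⁻¹ * A) : Set G) = ↑H) ∧
      ((A⁻¹ * A).card : ℝ) ≤ K * A.card ∧
      ∃ a : G, (A : Set G) ⊆ a • (↑(A⁻¹ * A) : Set G) := by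
  have hsmall : 2 * #(A * A⁻¹) < 3 * #A := by
    have hpos : (0 : ℝ) < #A := mod_cast hA.card_pos
    exact_mod_cast (by nlinarith : (2 * #(A * A⁻¹) : ℝ) < 3 * #A)
  obtain ⟨a, ha⟩ := hA
  refine ⟨⟨invMulSubgroupOfSmallMulInv A hsmall, rfl⟩, ?_, a, ?_⟩
  · exact (Nat.cast_le.2 (card_inv_mul_le_card_mul_inv hsmall)).trans h
  · exact_mod_cast subset_smul_inv_mul ha
end

section
/- Let G be a group and A a nonempty finite subset of G with |AA^{-1}| < 1.5|A|. Then (A^{-1}A)(A^{-1}A) = A^{-1}A. -/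
/-!
Write `x = b⁻¹ a` with `a, b ∈ A`. Then `A ∪ A x = (A a⁻¹ ∪ A b⁻¹) a` is a translate of a subset of
`A A⁻¹`, so `|A ∪ A x| < 3|A|/2` and hence `|A ∩ A x| > |A|/2`. For `x, y ∈ A⁻¹ A` the sets
`A ∩ A x` and `A ∩ A y⁻¹` are then more than half of `A` each, so they meet in some `c = a x = b y⁻¹`,
which gives `x y = a⁻¹ b ∈ A⁻¹ A`.
-/

open Finset Pointwise

namespace Finset

variable {G : Type*} [Group G] [DecidableEq G] {A : Finset G} {x y : G}

lemma inv_mul_subset_inv_mul_mul_inv_mul (A : Finset G) : A⁻¹ * A ⊆ A⁻¹ * A * (A⁻¹ * A) := by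
  intro z hz
  obtain ⟨_, ha', b, hb, rfl⟩ := mem_mul.1 hz
  obtain ⟨a, ha, rfl⟩ := mem_inv.1 ha'
  exact mem_mul.2 ⟨a⁻¹ * a, mul_mem_mul (inv_mem_inv ha) ha, a⁻¹ * b, hz, by group⟩

lemma card_union_mul_singleton_le_card_mul_inv (hx : x ∈ A⁻¹ * A) :
    #(A ∪ A * {x}) ≤ #(A * A⁻¹) := by
  obtain ⟨_, hb', a, ha, rfl⟩ := mem_mul.1 hx
  obtain ⟨b, hb, rfl⟩ := mem_inv.1 hb'
  have htranslate : A ∪ A * {b⁻¹ * a} = (A * {a⁻¹} ∪ A * {b⁻¹}) * {a} := by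
    rw [union_mul, mul_assoc, mul_assoc, singleton_mul_singleton, singleton_mul_singleton,
      inv_mul_cancel, singleton_one, mul_one]
  rw [htranslate, card_mul_singleton]
  exact card_le_card <| union_subset
    (mul_subset_mul_left (singleton_subset_iff.2 (inv_mem_inv ha)))
    (mul_subset_mul_left (singleton_subset_iff.2 (inv_mem_inv hb)))

lemma card_lt_two_mul_card_inter_mul_singleton (hA : 2 * #(A * A⁻¹) < 3 * #A)
    (hx : x ∈ A⁻¹ * A) : #A < 2 * #(A ∩ (A * {x})) := by
  have hunion := card_union_mul_singleton_le_card_mul_inv hx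
  have hsum := card_union_add_card_inter A (A * {x})
  rw [card_mul_singleton] at hsum
  omega

lemma mul_mem_inv_mul_of_card_lt_card_inter_add_card_inter
    (h : #A < #(A ∩ (A * {x})) + #(A ∩ (A * {y⁻¹}))) : x * y ∈ A⁻¹ * A := by
  obtain ⟨c, hc⟩ := inter_nonempty_of_card_lt_card_add_card inter_subset_left inter_subset_left h
  obtain ⟨a, ha, _, hx, hax⟩ := mem_mul.1 (mem_inter.1 (mem_inter.1 hc).1).2
  obtain ⟨b, hb, _, hy, hby⟩ := mem_mul.1 (mem_inter.1 (mem_inter.1 hc).2).2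
  rw [mem_singleton] at hx hy
  subst hx hy
  refine mem_mul.2 ⟨a⁻¹, inv_mem_inv ha, b, hb, ?_⟩
  rw [eq_inv_mul_of_mul_eq hax, ← hby]
  group

lemma inv_mul_mul_inv_mul_eq_of_two_mul_card_mul_inv_lt (hA : 2 * #(A * A⁻¹) < 3 * #A) :
    A⁻¹ * A * (A⁻¹ * A) = A⁻¹ * A := by
  refine Subset.antisymm ?_ (inv_mul_subset_inv_mul_mul_inv_mul A)
  intro _ hxy
  obtain ⟨x, hx, y, hy, rfl⟩ := mem_mul.1 hxy
  have hy' : y⁻¹ ∈ A⁻¹ * A := by simpa [mul_inv_rev] using inv_mem_inv hy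
  have hx_half := card_lt_two_mul_card_inter_mul_singleton hA hx
  have hy_half := card_lt_two_mul_card_inter_mul_singleton hA hy'
  exact mul_mem_inv_mul_of_card_lt_card_inter_add_card_inter (by omega)

end Finset

theorem stmt4_general {G : Type*} [Group G] [DecidableEq G] (A : Finset G)
    (h : ((A * A⁻¹).card : ℝ) < 1.5 * A.card) :
    (A⁻¹ * A) * (A⁻¹ * A) = A⁻¹ * A := by
  refine inv_mul_mul_inv_mul_eq_of_two_mul_card_mul_inv_lt ?_
  have hA : ((2 * #(A * A⁻¹) : ℕ) : ℝ) < (3 * #A : ℕ) := by push_cast; linarith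
  exact_mod_cast hA

theorem stmt4 {G : Type*} [Group G] [DecidableEq G] (A : Finset G)
    (hA : A.Nonempty) (h : ((A * A⁻¹).card : ℝ) < 1.5 * A.card) :
    (A⁻¹ * A) * (A⁻¹ * A) = A⁻¹ * A :=
  stmt4_general A h
end

section
/- Let G be a group, H a finite subgroup, A a finite subset with |AA^{-1}| ≤ (2 - ε)|A| for some ε ∈ (0,1], and suppose AHA^{-1} = AA^{-1} and |AA^{-1}| ≥ 2|AH| - |H|. Then |H| ≥ ε|A|, and A meets at most 2/ε - 1 left cosets of H; in particular A ⊆ XH for some set X with |X| ≤ 2/ε. -/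
/-! Since `A ⊆ AH`, the two cardinality hypotheses combine to `2|AH| - |H| ≤ (2 - ε)|AH|`,
i.e. `ε|AH| ≤ |H|`. As `AH` is the union of the `k` left cosets of `H` that `A` meets,
`|AH| = k|H|`, so `εk ≤ 1`; choosing one representative per coset gives `X`. -/

open Finset Pointwise

namespace Subgroup

variable {G : Type*} [Group G] [DecidableEq G] (H : Subgroup G)

theorem card_finset_mul_toFinset [Fintype H] [DecidableEq (G ⧸ H)] (A : Finset G) :
    (A * (H : Set G).toFinset).card =
      (A.image (QuotientGroup.mk : G → G ⧸ H)).card * Nat.card H := by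
  rw [mul_comm, ← Set.ncard_coe_finset, ← Nat.card_coe_set_eq, Finset.coe_mul, Set.coe_toFinset,
    card_mul_eq_card_subgroup_mul_card_quotient, Nat.card_coe_set_eq, ← Finset.coe_image,
    Set.ncard_coe_finset]

theorem exists_finset_subset_mul [DecidableEq (G ⧸ H)] (A : Finset G) :
    ∃ X : Finset G, X.card ≤ (A.image (QuotientGroup.mk : G → G ⧸ H)).card ∧
      (A : Set G) ⊆ X * H := by
  refine ⟨(A.image (QuotientGroup.mk : G → G ⧸ H)).image Quotient.out, card_image_le, ?_⟩
  intro a ha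
  obtain ⟨h, hout⟩ := QuotientGroup.mk_out_eq_mul H a
  refine ⟨_, mem_image_of_mem _ (mem_image_of_mem _ ha), (h : G)⁻¹, H.inv_mem h.2, ?_⟩
  simp [hout]

end Subgroup

theorem stmt11_general {G : Type*} [Group G] [Fintype G] [DecidableEq G]
    (H : Subgroup G) [DecidableEq (G ⧸ H)] [DecidablePred (· ∈ H)] (A : Finset G) (ε : ℝ)
    (hε : 0 < ε) (hε1 : ε ≤ 1)
    (hdoub : ((A * A⁻¹).card : ℝ) ≤ (2 - ε) * A.card)
    (hineq : 2 * ((A * (H : Set G).toFinset).card : ℝ) - (Nat.card H : ℝ) ≤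
      ((A * A⁻¹).card : ℝ)) :
    ε * A.card ≤ (Nat.card H : ℝ) ∧
    ((A.image (QuotientGroup.mk : G → G ⧸ H)).card : ℝ) ≤ 2 / ε - 1 ∧
    ∃ X : Finset G, (X.card : ℝ) ≤ 2 / ε ∧ (A : Set G) ⊆ ↑X * (H : Set G) := by
  set k := (A.image (QuotientGroup.mk : G → G ⧸ H)).card
  have hA_le : (A.card : ℝ) ≤ (A * (H : Set G).toFinset).card := by
    exact_mod_cast card_le_card_mul_right ⟨1, by simp⟩
  have hAH : ((A * (H : Set G).toFinset).card : ℝ) = k * Nat.card H := by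
    exact_mod_cast H.card_finset_mul_toFinset A
  have hH : (0 : ℝ) < Nat.card H := by exact_mod_cast Nat.card_pos
  have hAH_le : ε * (A * (H : Set G).toFinset).card ≤ (Nat.card H : ℝ) := by nlinarith
  have hk : ε * k ≤ 1 := by nlinarith
  have hk_le : (k : ℝ) ≤ 2 / ε - 1 := by
    rw [le_sub_iff_add_le, le_div_iff₀ hε]
    nlinarith
  obtain ⟨X, hX, hAX⟩ := H.exists_finset_subset_mul A
  refine ⟨by nlinarith, hk_le, X, ?_, hAX⟩
  calc (X.card : ℝ) ≤ k := by exact_mod_cast hX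
    _ ≤ 2 / ε := by linarith

theorem stmt11 {G : Type*} [Group G] [Fintype G] [DecidableEq G]
    (H : Subgroup G) [DecidableEq (G ⧸ H)] [DecidablePred (· ∈ H)] (A : Finset G) (ε : ℝ)
    (hA : A.Nonempty) (hε : 0 < ε) (hε1 : ε ≤ 1)
    (hdoub : ((A * A⁻¹).card : ℝ) ≤ (2 - ε) * A.card)
    (hAHA : (A : Set G) * (H : Set G) * (A : Set G)⁻¹ = (↑(A * A⁻¹) : Set G))
    (hineq : 2 * ((A * (H : Set G).toFinset).card : ℝ) - (Nat.card H : ℝ) ≤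
      ((A * A⁻¹).card : ℝ)) :
    ε * A.card ≤ (Nat.card H : ℝ) ∧
    ((A.image (QuotientGroup.mk : G → G ⧸ H)).card : ℝ) ≤ 2 / ε - 1 ∧
    ∃ X : Finset G, (X.card : ℝ) ≤ 2 / ε ∧ (A : Set G) ⊆ ↑X * (H : Set G) :=
  stmt11_general H A ε hε hε1 hdoub hineq
end

section
/- Let G be a group, H a subgroup, and A a finite subset such that A intersects R distinct left cosets of H and AHA^{-1} = AA^{-1}. Then |AA^{-1}| ≥ R|H|. -/
open Finset Pointwise

/-!
Fix `a ∈ A`. The set `A * H` is a union of `R` left cosets of `H`, so it has `R * |H|` elements,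
and its right translate `A * H * {a⁻¹}` lies in `A * H * A⁻¹ = A * A⁻¹`.
-/

theorem Set.natCard_le_natCard_mul_right {G : Type*} [Group G] {S B : Set G} {b : G}
    (hb : b ∈ B) (hfin : (S * B).Finite) : Nat.card S ≤ Nat.card (S * B : Set G) :=
  calc Nat.card S = Nat.card (S * {b} : Set G) := by
        rw [Set.mul_singleton, Nat.card_image_of_injective (mul_left_injective b)]
    _ ≤ Nat.card (S * B : Set G) :=
        Nat.card_mono hfin (Set.mul_subset_mul_left (Set.singleton_subset_iff.2 hb))

theorem Subgroup.card_mul_card_image_mk_le_natCard_mul_inv {G : Type*} [Group G]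
    (H : Subgroup G) {A : Set G} (hfin : (A * A⁻¹).Finite) (hAHA : A * H * A⁻¹ ⊆ A * A⁻¹) :
    Nat.card H * Nat.card (A.image (QuotientGroup.mk : G → G ⧸ H)) ≤
      Nat.card (A * A⁻¹ : Set G) := by
  rcases A.eq_empty_or_nonempty with rfl | ⟨a, ha⟩
  · simp
  rw [← card_mul_eq_card_subgroup_mul_card_quotient]
  calc Nat.card (A * H : Set G) ≤ Nat.card (A * H * A⁻¹ : Set G) :=
        Set.natCard_le_natCard_mul_right (Set.inv_mem_inv.2 ha) (hfin.subset hAHA)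
    _ ≤ Nat.card (A * A⁻¹ : Set G) := Nat.card_mono hfin hAHA

theorem stmt12_general {G : Type*} [Group G] [DecidableEq G]
    (H : Subgroup G) [DecidableEq (G ⧸ H)] (A : Finset G) (R : ℕ)
    (hR : (A.image (QuotientGroup.mk : G → G ⧸ H)).card = R)
    (hAHA : (A : Set G) * (H : Set G) * (A : Set G)⁻¹ = (↑(A * A⁻¹) : Set G)) :
    R * Nat.card H ≤ (A * A⁻¹).card := by
  have hcoe : ((A * A⁻¹ : Finset G) : Set G) = A * (A : Set G)⁻¹ := by rw [coe_mul, coe_inv]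
  have key := H.card_mul_card_image_mk_le_natCard_mul_inv
    (hcoe ▸ (A * A⁻¹).finite_toSet) (hAHA.trans hcoe).subset
  rwa [← hcoe, ← Finset.coe_image, Nat.card_coe_set_eq, Nat.card_coe_set_eq, Set.ncard_coe_finset,
    Set.ncard_coe_finset, hR, mul_comm] at key

theorem stmt12 {G : Type*} [Group G] [Fintype G] [DecidableEq G]
    (H : Subgroup G) [DecidableEq (G ⧸ H)] (A : Finset G) (R : ℕ)
    (hR : (A.image (QuotientGroup.mk : G → G ⧸ H)).card = R)
    (hAHA : (A : Set G) * (H : Set G) * (A : Set G)⁻¹ = (↑(A * A⁻¹) : Set G)) :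
    R * Nat.card H ≤ (A * A⁻¹).card :=
  stmt12_general H A R hR hAHA
end

section
/- Let G be a finite group, H ≤ G a subgroup, A ⊆ G, x ∈ G, and suppose |A ∩ xH| ≥ c|A| for some c > 0. If A meets R distinct left cosets of H, then |AA^{-1}| ≥ R·c|A|; hence R ≤ |AA^{-1}|/(c|A|). -/
/-!
If `B` lies in the left coset `xH`, then for every `a` the products `a b⁻¹` (`b ∈ B`) are `#B`
distinct elements, and right multiplication by `x` sends all of them into the coset `aH`. Hence the
map `y ↦ (y x)H` sends `A B⁻¹` into the cosets met by `A` with fibres of size at least `#B`, so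
`#(A B⁻¹) ≥ R · #B`. Apply this to `B = A ∩ xH ⊆ A`.
-/

open Finset Pointwise

namespace Subgroup

variable {G : Type*} [Group G] (H : Subgroup G)

theorem mk_mul_inv_mul_eq_mk {a b x : G} (hb : b ∈ x • (H : Set G)) :
    ((a * b⁻¹ * x : G) : G ⧸ H) = a := by
  rw [QuotientGroup.eq, show (a * b⁻¹ * x)⁻¹ * a = x⁻¹ * b by group]
  exact (mem_leftCoset_iff x).1 hb

theorem card_mul_card_image_mk_le_card_mul_inv [DecidableEq G] [DecidableEq (G ⧸ H)]
    (A B : Finset G) {x : G} (hB : (B : Set G) ⊆ x • (H : Set G)) :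
    #B * #(A.image (QuotientGroup.mk : G → G ⧸ H)) ≤ #(A * B⁻¹) := by
  refine mul_card_image_le_card_of_maps_to (f := fun y => ((y * x : G) : G ⧸ H)) ?_ _ ?_
  · rintro _ hy
    obtain ⟨a, ha, _, hb', rfl⟩ := mem_mul.1 hy
    obtain ⟨b, hb, rfl⟩ := mem_inv.1 hb'
    rw [H.mk_mul_inv_mul_eq_mk (hB hb)]
    exact mem_image_of_mem _ ha
  · intro q hq
    obtain ⟨a, ha, rfl⟩ := mem_image.1 hq
    calc #B = #(B.image fun b => a * b⁻¹) :=
          (card_image_of_injective _ ((mul_right_injective a).comp inv_injective)).symm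
      _ ≤ #{y ∈ A * B⁻¹ | ((y * x : G) : G ⧸ H) = a} := by
          refine card_le_card fun _ hy => ?_
          obtain ⟨b, hb, rfl⟩ := mem_image.1 hy
          exact mem_filter.2 ⟨mul_mem_mul ha (inv_mem_inv hb), H.mk_mul_inv_mul_eq_mk (hB hb)⟩

end Subgroup

theorem stmt14 {G : Type*} [Group G] [Fintype G] [DecidableEq G]
    (H : Subgroup G) [DecidableEq (G ⧸ H)] [DecidablePred (· ∈ H)]
    (A : Finset G) (x : G) (c : ℝ) (hc : 0 < c)
    (hcap : c * A.card ≤ ((A ∩ x • (H : Set G).toFinset).card : ℝ)) (R : ℕ)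
    (hR : (A.image (QuotientGroup.mk : G → G ⧸ H)).card = R) :
    (R : ℝ) * (c * A.card) ≤ ((A * A⁻¹).card : ℝ) ∧
    (R : ℝ) ≤ ((A * A⁻¹).card : ℝ) / (c * A.card) := by
  set B := A ∩ x • (H : Set G).toFinset
  have hBcoset : (B : Set G) ⊆ x • (H : Set G) := fun b hb => by
    have hb := (mem_inter.1 hb).2
    rwa [← mem_coe, coe_smul_finset, Set.coe_toFinset] at hb
  have hkey : R * #B ≤ #(A * A⁻¹) := by
    rw [← hR, mul_comm]
    exact (H.card_mul_card_image_mk_le_card_mul_inv A B hBcoset).trans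
      (card_le_card (mul_subset_mul_left (inv_subset_inv inter_subset_left)))
  have hbound : (R : ℝ) * (c * #A) ≤ #(A * A⁻¹) :=
    (mul_le_mul_of_nonneg_left hcap R.cast_nonneg).trans (by exact_mod_cast hkey)
  refine ⟨hbound, ?_⟩
  rcases A.eq_empty_or_nonempty with rfl | hA
  · simp [← hR]
  · rw [le_div_iff₀ (by positivity)]
    exact hbound
end

section
/- Let G be a group and A a nonempty finite subset with |AA^{-1}| < 2|A|. Then for every x, y ∈ A^{-1}A, one has xy ∈ (A^{-1}A)(A^{-1}A), and moreover if additionally |AA^{-1}| < 1.5|A| then A^{-1}A is closed under multiplication. -/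
/-!
Write `r(x)` for the number of representations `x = a⁻¹ * a'` with `a, a' ∈ A`. If `x = a⁻¹ * b`,
the translates `a • A⁻¹` and `b • A⁻¹` both lie in `A * A⁻¹`, so their overlap, which has
`r(x)` elements, has size at least `2|A| - |A * A⁻¹|`. When `|A * A⁻¹| < 3|A|/2` this exceeds
`|A|/2`, and for `x, y ∈ A⁻¹ * A` the pigeonhole principle inside a translate of `A⁻¹` produces a
representation of `x * y`. The first claim holds for any `A` by definition of the product set.
-/

open Finset Pointwise

namespace Finset

variable {G : Type*} [Group G] [DecidableEq G] {A B : Finset G} {x y : G}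

lemma two_mul_card_le_convolution_add_card_mul (hx : x ∈ B⁻¹ * B) :
    2 * #A ≤ A.convolution A⁻¹ x + #(B * A) := by
  obtain ⟨_, hu, b, hb, rfl⟩ := mem_mul.1 hx
  obtain ⟨a, ha, rfl⟩ := mem_inv.1 hu
  have hunion : #(a • A ∪ b • A) ≤ #(B * A) :=
    card_le_card <| union_subset (smul_finset_subset_mul ha) (smul_finset_subset_mul hb)
  have := card_inter_add_card_union (a • A) (b • A)
  rw [card_smul_inter_smul, card_smul_finset, card_smul_finset] at this
  omega

lemma mul_mem_inv_mul_of_card_lt_convolution_add_convolution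
    (h : #A < A⁻¹.convolution A x + A⁻¹.convolution A y) : x * y ∈ A⁻¹ * A := by
  rw [← card_inter_smul_inv, ← card_inter_smul_inv] at h
  rw [← convolution_pos, ← card_inter_smul_inv, card_pos]
  -- Translating by `x` puts the representations of `y` inside `x • A⁻¹`, next to those of `x`.
  have hy : #(x • A⁻¹ ∩ (x * y) • A⁻¹) = #(A⁻¹ ∩ y • A⁻¹) := by
    rw [mul_smul, ← smul_finset_inter, card_smul_finset]
  obtain ⟨t, ht⟩ := inter_nonempty_of_card_lt_card_add_card (s := x • A⁻¹)
    inter_subset_right inter_subset_left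
    (by rwa [card_smul_finset, card_inv, hy])
  simp only [mem_inter] at ht
  exact ⟨t, mem_inter.2 ⟨ht.1.1, ht.2.2⟩⟩

end Finset

theorem stmt16_general {G : Type*} [Group G] [DecidableEq G] (A : Finset G) :
    (∀ x ∈ A⁻¹ * A, ∀ y ∈ A⁻¹ * A, x * y ∈ (A⁻¹ * A) * (A⁻¹ * A)) ∧
    (((A * A⁻¹).card : ℝ) < 1.5 * A.card →
      ∀ x ∈ A⁻¹ * A, ∀ y ∈ A⁻¹ * A, x * y ∈ A⁻¹ * A) := by
  refine ⟨fun x hx y hy ↦ mul_mem_mul hx hy, fun h x hx y hy ↦ ?_⟩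
  have hdoubling : 2 * #(A * A⁻¹) < 3 * #A := by
    exact_mod_cast (by linarith : (2 * #(A * A⁻¹) : ℝ) < 3 * #A)
  have hrx := two_mul_card_le_convolution_add_card_mul (A := A⁻¹) hx
  have hry := two_mul_card_le_convolution_add_card_mul (A := A⁻¹) hy
  rw [inv_inv, card_inv] at hrx hry
  exact mul_mem_inv_mul_of_card_lt_convolution_add_convolution (by omega)

theorem stmt16 {G : Type*} [Group G] [DecidableEq G] (A : Finset G)
    (hA : A.Nonempty) (h : (A * A⁻¹).card < 2 * A.card) :
    (∀ x ∈ A⁻¹ * A, ∀ y ∈ A⁻¹ * A, x * y ∈ (A⁻¹ * A) * (A⁻¹ * A)) ∧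
    (((A * A⁻¹).card : ℝ) < 1.5 * A.card →
      ∀ x ∈ A⁻¹ * A, ∀ y ∈ A⁻¹ * A, x * y ∈ A⁻¹ * A) :=
  stmt16_general A
end
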